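/- arXiv:2408.05807 — 6 statements merged into one kernel-verified Lean document; each statement's English description precedes it below -/
import Mathlib

section
/- For every real γ ≥ 1, the limit as d → ∞ (d ranging over the positive integers) of (1/d)·log(∫_{ℝ^d} exp(−(d/(2γ))·(‖x‖²/d)^γ) dx) exists and equals (1/2)·(log(2π) + 1 − 1/γ). -/
open MeasureTheory Filter Real
open Topology Module Metric
open scoped Nat

/-!
A dilation and the identity `vol B₁ · Γ(d/p + 1) = ∫ exp (-‖x‖ ^ p)` give the closed form
`∫ exp (-b ‖x‖ ^ p) = vol B₁ · Γ(d/p + 1) · b ^ (-d/p)` in dimension `d`. With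
`vol B₁ = π^(d/2) / Γ(d/2 + 1)` the normalised logarithm of the kernel's integral becomes a
combination of `log Γ(d/a + 1) / d - log d / a` for `a = 2` and `a = 2γ`, in which the `log d`
terms cancel. Their limits come from the weak Stirling formula
`log Γ(x + 1) = x log x - x + o(x)`, obtained from the factorial case by squeezing `Γ(x + 1)`
between `⌊x⌋!` and `(⌊x⌋ + 1)!`.
-/

theorem tendsto_log_factorial_div_sub_log :
    Tendsto (fun n : ℕ => log n ! / n - log n) atTop (𝓝 (-1)) := by
  have h_log_div : Tendsto (fun n : ℕ => log n / n) atTop (𝓝 0) :=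
    isLittleO_log_id_atTop.tendsto_div_nhds_zero.comp tendsto_natCast_atTop_atTop
  have h_stirling : Tendsto (fun n : ℕ => log (Stirling.stirlingSeq n) / n) atTop (𝓝 0) :=
    ((continuousAt_log (by positivity)).tendsto.comp
      Stirling.tendsto_stirlingSeq_sqrt_pi).div_atTop tendsto_natCast_atTop_atTop
  have h_lim := (h_stirling.add (((tendsto_const_div_atTop_nhds_zero_nat (log 2)).add
    h_log_div).const_mul (1 / 2))).sub_const 1
  rw [show (0 : ℝ) + 1 / 2 * (0 + 0) - 1 = -1 by norm_num] at h_lim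
  refine h_lim.congr' ?_
  filter_upwards [eventually_gt_atTop 0] with n hn
  have hn' : (n : ℝ) ≠ 0 := by positivity
  rw [Stirling.log_stirlingSeq_formula, log_mul two_ne_zero hn', log_div hn' (exp_ne_zero 1),
    log_exp]
  field_simp
  ring

theorem factorial_floor_le_Gamma_add_one {x : ℝ} (hx : 1 ≤ x) :
    (⌊x⌋₊ ! : ℝ) ≤ Gamma (x + 1) := by
  have hn : (1 : ℝ) ≤ ⌊x⌋₊ := by exact_mod_cast Nat.one_le_floor_iff x |>.mpr hx
  rw [← Gamma_nat_eq_factorial]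
  exact Gamma_strictMonoOn_Ici.monotoneOn (by simp; linarith) (by simp; linarith)
    (by gcongr; exact Nat.floor_le (by linarith))

theorem Gamma_add_one_le_factorial_floor_succ {x : ℝ} (hx : 1 ≤ x) :
    Gamma (x + 1) ≤ ((⌊x⌋₊ + 1)! : ℝ) := by
  have hn : (1 : ℝ) ≤ ⌊x⌋₊ := by exact_mod_cast Nat.one_le_floor_iff x |>.mpr hx
  rw [← Gamma_nat_eq_factorial, Nat.cast_succ]
  exact Gamma_strictMonoOn_Ici.monotoneOn (by simp; linarith) (by simp; linarith)
    (by gcongr; exact (Nat.lt_floor_add_one x).le)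

theorem tendsto_log_succ_div_succ :
    Tendsto (fun n : ℕ => log (n + 1 : ℝ) / (n + 1)) atTop (𝓝 0) := by
  have := isLittleO_log_id_atTop.tendsto_div_nhds_zero.comp
    (tendsto_natCast_atTop_atTop.comp (tendsto_add_atTop_nat 1))
  simpa [Function.comp_def] using this

theorem tendsto_log_factorial_div_succ_sub_log_succ :
    Tendsto (fun n : ℕ => log n ! / (n + 1) - log (n + 1 : ℝ)) atTop (𝓝 (-1)) := by
  have h := (tendsto_log_factorial_div_sub_log.comp (tendsto_add_atTop_nat 1)).sub
    tendsto_log_succ_div_succ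
  rw [sub_zero] at h
  refine h.congr fun n => ?_
  simp only [Function.comp_apply, Nat.factorial_succ, Nat.cast_mul, Nat.cast_succ]
  rw [log_mul (by positivity) (by positivity)]
  ring

theorem tendsto_log_factorial_succ_div_sub_log :
    Tendsto (fun n : ℕ => log (n + 1)! / n - log n) atTop (𝓝 (-1)) := by
  have h_ratio : Tendsto (fun n : ℕ => ((n : ℝ) + 1) / n) atTop (𝓝 1) := by
    have h := (tendsto_const_div_atTop_nhds_zero_nat (1 : ℝ)).const_add 1
    rw [add_zero] at h
    refine h.congr' ?_
    filter_upwards [eventually_gt_atTop 0] with n hn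
    field_simp
  have h := tendsto_log_factorial_div_sub_log.add (tendsto_log_succ_div_succ.mul h_ratio)
  rw [zero_mul, add_zero] at h
  refine h.congr' ?_
  filter_upwards [eventually_gt_atTop 0] with n hn
  have hn' : (n : ℝ) ≠ 0 := by positivity
  simp only [Nat.factorial_succ, Nat.cast_mul, Nat.cast_succ]
  rw [log_mul (by positivity) (by positivity)]
  field_simp
  ring

theorem tendsto_log_Gamma_add_one_div_sub_log :
    Tendsto (fun x : ℝ => log (Gamma (x + 1)) / x - log x) atTop (𝓝 (-1)) := by
  refine tendsto_of_tendsto_of_tendsto_of_le_of_le'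
    (tendsto_log_factorial_div_succ_sub_log_succ.comp tendsto_nat_floor_atTop)
    (tendsto_log_factorial_succ_div_sub_log.comp tendsto_nat_floor_atTop) ?_ ?_
  all_goals
    filter_upwards [eventually_ge_atTop 1] with x hx
    have h_floor_le : (⌊x⌋₊ : ℝ) ≤ x := Nat.floor_le (by linarith)
    have h_lt_floor : x < ⌊x⌋₊ + 1 := Nat.lt_floor_add_one x
    have h_floor_pos : (0 : ℝ) < ⌊x⌋₊ := by exact_mod_cast Nat.floor_pos.mpr hx
    have h_log_fact : 0 ≤ log (⌊x⌋₊ ! : ℝ) := log_nonneg (by exact_mod_cast ⌊x⌋₊.factorial_pos)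
    have h_ge := log_le_log (by positivity) (factorial_floor_le_Gamma_add_one hx)
    have h_le := log_le_log (Gamma_pos_of_pos (by linarith))
      (Gamma_add_one_le_factorial_floor_succ hx)
    simp only [Function.comp_apply]
  · have h_div := div_le_div₀ (h_log_fact.trans h_ge) h_ge (by linarith) h_lt_floor.le
    have h_log := log_le_log (by linarith) h_lt_floor.le
    linarith
  · have h_div := div_le_div₀ (h_log_fact.trans (h_ge.trans h_le)) h_le h_floor_pos h_floor_le
    have h_log := log_le_log h_floor_pos h_floor_le
    linarith

theorem tendsto_log_Gamma_div_add_one_div_sub_log {a : ℝ} (ha : 0 < a) :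
    Tendsto (fun d : ℕ => log (Gamma (d / a + 1)) / d - log d / a) atTop
      (𝓝 (-(log a + 1) / a)) := by
  have h := ((tendsto_log_Gamma_add_one_div_sub_log.comp
    (tendsto_natCast_atTop_atTop.atTop_div_const ha)).div_const a).sub_const (log a / a)
  rw [show -1 / a - log a / a = -(log a + 1) / a by ring] at h
  refine h.congr' ?_
  filter_upwards [eventually_gt_atTop 0] with d hd
  have hd' : (d : ℝ) ≠ 0 := by positivity
  simp only [Function.comp_apply]
  rw [log_div hd' ha.ne']
  field_simp
  ring

section HaarIntegral

variable {E : Type*} [NormedAddCommGroup E] [NormedSpace ℝ E] [FiniteDimensional ℝ E]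
  [MeasurableSpace E] [BorelSpace E] (μ : Measure E) [μ.IsAddHaarMeasure]

theorem integral_exp_neg_mul_norm_rpow {p b : ℝ} (hp : 0 < p) (hb : 0 < b) :
    ∫ x, exp (-b * ‖x‖ ^ p) ∂μ =
      μ.real (ball 0 1) * Gamma (finrank ℝ E / p + 1) * b ^ (-(finrank ℝ E / p)) := by
  have h_ball : μ.real (ball 0 1) * Gamma (finrank ℝ E / p + 1) = ∫ x, exp (-‖x‖ ^ p) ∂μ := by
    rw [measureReal_def, measure_unitBall_eq_integral_div_gamma μ hp,
      ENNReal.toReal_ofReal (div_nonneg (integral_nonneg fun _ => (exp_pos _).le)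
        (Gamma_pos_of_pos (by positivity)).le),
      div_mul_cancel₀ _ (Gamma_pos_of_pos (by positivity)).ne']
  have h_scale := Measure.integral_comp_smul μ (fun x : E => exp (-‖x‖ ^ p)) (b ^ p⁻¹)
  have h_norm (x : E) : -‖b ^ p⁻¹ • x‖ ^ p = -b * ‖x‖ ^ p := by
    rw [neg_mul, norm_smul, norm_of_nonneg (by positivity), mul_rpow (by positivity) (norm_nonneg x),
      rpow_inv_rpow hb.le hp.ne']
  have h_factor : |((b ^ p⁻¹) ^ finrank ℝ E)⁻¹| = b ^ (-(finrank ℝ E / p)) := by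
    rw [abs_of_pos (by positivity), ← rpow_natCast, ← rpow_mul hb.le, ← rpow_neg hb.le]
    ring_nf
  simp only [h_norm, h_factor, smul_eq_mul] at h_scale
  rw [h_scale, ← h_ball]
  ring

end HaarIntegral

theorem gamma_kernel_exponent_eq {γ d r : ℝ} (hd : 0 < d) (hr : 0 ≤ r) :
    -(d / (2 * γ)) * (r ^ 2 / d) ^ γ = -(d ^ (1 - γ) / (2 * γ)) * r ^ (2 * γ) := by
  rw [div_rpow (by positivity) hd.le, ← rpow_natCast, ← rpow_mul hr, rpow_sub hd, rpow_one]
  push_cast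
  ring

theorem integral_gamma_kernel {γ : ℝ} (hγ : 0 < γ) {d : ℕ} (hd : 0 < d) :
    ∫ x : EuclideanSpace ℝ (Fin d), exp (-((d : ℝ) / (2 * γ)) * ((‖x‖ ^ 2 / (d : ℝ)) ^ γ)) =
      √π ^ d / Gamma (d / 2 + 1) * Gamma (d / (2 * γ) + 1) *
        ((d : ℝ) ^ (1 - γ) / (2 * γ)) ^ (-(d / (2 * γ))) := by
  have : Nonempty (Fin d) := ⟨⟨0, hd⟩⟩
  simp_rw [gamma_kernel_exponent_eq (Nat.cast_pos.mpr hd) (norm_nonneg _)]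
  rw [integral_exp_neg_mul_norm_rpow volume (by positivity) (by positivity), measureReal_def,
    EuclideanSpace.volume_ball, finrank_euclideanSpace_fin]
  simp only [ENNReal.ofReal_one, one_pow, one_mul, Fintype.card_fin]
  rw [ENNReal.toReal_ofReal (by positivity)]

theorem one_div_mul_log_integral_gamma_kernel {γ : ℝ} (hγ : 0 < γ) {d : ℕ} (hd : 0 < d) :
    1 / (d : ℝ) * log (∫ x : EuclideanSpace ℝ (Fin d),
        exp (-((d : ℝ) / (2 * γ)) * ((‖x‖ ^ 2 / (d : ℝ)) ^ γ))) =
      log π / 2 + (log (Gamma (d / (2 * γ) + 1)) / d - log d / (2 * γ))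
        - (log (Gamma (d / 2 + 1)) / d - log d / 2) + log (2 * γ) / (2 * γ) := by
  have hd' : (0 : ℝ) < d := Nat.cast_pos.mpr hd
  have hΓ {s : ℝ} (hs : 0 < s) : Gamma (s + 1) ≠ 0 := (Gamma_pos_of_pos (by linarith)).ne'
  rw [integral_gamma_kernel hγ hd, log_mul (by positivity) (by positivity),
    log_mul (by positivity) (hΓ (by positivity)), log_div (by positivity) (hΓ (by positivity)),
    log_pow, log_sqrt pi_pos.le, log_rpow (by positivity), log_div (by positivity) (by positivity),
    log_rpow hd']
  field_simp
  ring

theorem gamma_kernel_normalization (γ : ℝ) (hγ : 1 ≤ γ) :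
    Tendsto (fun d : ℕ =>
        (1 / (d : ℝ)) * Real.log (∫ x : EuclideanSpace ℝ (Fin d),
          Real.exp (-((d : ℝ) / (2 * γ)) * ((‖x‖ ^ 2 / (d : ℝ)) ^ γ))))
      atTop (nhds ((1 / 2) * (Real.log (2 * Real.pi) + 1 - 1 / γ))) := by
  have hγ₀ : 0 < γ := by linarith
  have h_lim := ((tendsto_const_nhds (x := log π / 2)).add
    (tendsto_log_Gamma_div_add_one_div_sub_log (by positivity : (0 : ℝ) < 2 * γ))).sub
    (tendsto_log_Gamma_div_add_one_div_sub_log two_pos) |>.add_const (log (2 * γ) / (2 * γ))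
  have h_value : log π / 2 + -(log (2 * γ) + 1) / (2 * γ) - -(log 2 + 1) / 2 +
      log (2 * γ) / (2 * γ) = 1 / 2 * (log (2 * π) + 1 - 1 / γ) := by
    rw [log_mul two_ne_zero pi_pos.ne']
    field_simp
    ring
  rw [h_value] at h_lim
  refine h_lim.congr' ?_
  filter_upwards [eventually_gt_atTop 0] with d hd
  exact (one_div_mul_log_integral_gamma_kernel hγ₀ hd).symm
end

section
/- Let d ≥ 1, let Λ > 0, let C be a symmetric positive-definite real d×d matrix all of whose eigenvalues are at most Λ, and let t ≥ 0. Set A = (I + t·C)^{−1}. Then ∫_{ℝ^d} ((1/d)·⟪x, A·x⟫ − (1/d)·Tr(A·C))² · p_C(x) dx ≤ 2·Λ²/d. -/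
/-!
Diagonalise `C = U diag(λ) Uᵀ` and substitute `x = M z` with `M = U diag(√λ)`, so that
`M Mᵀ = C`. The density `p_C` becomes the standard Gaussian density `∏ φ(zᵢ)` with
`φ = gaussianPDFReal 0 1`, the quadratic form becomes `∑ μᵢ zᵢ²` and the trace becomes `∑ μᵢ`,
where `μᵢ = λᵢ / (1 + t λᵢ) ∈ (0, Λ]`. The integral is then the variance of `∑ μᵢ zᵢ²` for
independent standard normal `zᵢ`, that is `2 ∑ μᵢ² ≤ 2 d Λ²`, because
`E (z² - 1)² = E z⁴ - 2 E z² + 1 = 2`.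
-/

open MeasureTheory Matrix

/-- Centered multivariate Gaussian density on ℝ^d with covariance matrix `C`. -/
noncomputable def gaussDensity (d : ℕ) (C : Matrix (Fin d) (Fin d) ℝ)
    (y : Fin d → ℝ) : ℝ :=
  ((2 * Real.pi) ^ d * C.det) ^ (-(1 / 2 : ℝ)) *
    Real.exp (-(1 / 2) * (y ⬝ᵥ C⁻¹.mulVec y))

open Real Set ProbabilityTheory Unitary
open scoped Nat

lemma gaussianPDFReal_zero_one (x : ℝ) :
    gaussianPDFReal 0 1 x = (√(2 * π))⁻¹ * exp (-(1 / 2) * x ^ 2) := by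
  simp only [gaussianPDFReal, NNReal.coe_one, mul_one, sub_zero]
  ring_nf

lemma integrable_pow_mul_gaussianPDFReal (n : ℕ) :
    Integrable fun x : ℝ => x ^ n * gaussianPDFReal 0 1 x := by
  have h := integrable_rpow_mul_exp_neg_mul_sq (b := 1 / 2) (by norm_num)
    (neg_one_lt_zero.trans_le n.cast_nonneg)
  simp only [rpow_natCast] at h
  simpa only [gaussianPDFReal_zero_one, mul_left_comm] using h.const_mul (√(2 * π))⁻¹

lemma integral_pow_two_mul_mul_gaussianPDFReal (k : ℕ) :
    ∫ x, x ^ (2 * k) * gaussianPDFReal 0 1 x = (2 * k - 1 : ℕ)‼ := by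
  have h_even : ∫ x, x ^ (2 * k) * exp (-(1 / 2) * x ^ 2)
      = 2 * ∫ x in Ioi 0, x ^ ((2 * k : ℕ) : ℝ) * exp (-(1 / 2) * x ^ (2 : ℝ)) := by
    rw [← integral_comp_abs]
    congr 1 with x
    rw [rpow_natCast, rpow_two, (even_two_mul k).pow_abs, sq_abs]
  have h_rpow : (1 / 2 : ℝ) ^ (-((2 * k : ℕ) + 1 : ℝ) / 2) = 2 ^ k * √2 := by
    rw [one_div, inv_rpow zero_le_two, ← rpow_neg zero_le_two, sqrt_eq_rpow, ← rpow_natCast,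
      ← rpow_add two_pos]
    congr 1
    push_cast
    ring
  have h_gamma : Gamma (((2 * k : ℕ) + 1 : ℝ) / 2) = (2 * k - 1 : ℕ)‼ * √π / 2 ^ k := by
    rw [← Gamma_nat_add_half]
    congr 1
    push_cast
    ring
  simp_rw [gaussianPDFReal_zero_one, mul_left_comm _ (√(2 * π))⁻¹]
  rw [integral_const_mul, h_even, integral_rpow_mul_exp_neg_mul_rpow two_pos
    (neg_one_lt_zero.trans_le (by positivity)) one_half_pos, h_rpow, h_gamma,
    sqrt_mul zero_le_two]
  field_simp

lemma sq_sub_one_mul_gaussianPDFReal_eq (s : ℝ) :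
    (s ^ 2 - 1) * gaussianPDFReal 0 1 s
      = s ^ (2 * 1) * gaussianPDFReal 0 1 s - s ^ (2 * 0) * gaussianPDFReal 0 1 s := by
  ring

lemma sq_sub_one_sq_mul_gaussianPDFReal_eq (s : ℝ) :
    (s ^ 2 - 1) ^ 2 * gaussianPDFReal 0 1 s
      = s ^ (2 * 2) * gaussianPDFReal 0 1 s - 2 * (s ^ (2 * 1) * gaussianPDFReal 0 1 s)
        + s ^ (2 * 0) * gaussianPDFReal 0 1 s := by
  ring

lemma integrable_sq_sub_one_mul_gaussianPDFReal :
    Integrable fun s : ℝ => (s ^ 2 - 1) * gaussianPDFReal 0 1 s := by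
  simp_rw [sq_sub_one_mul_gaussianPDFReal_eq]
  exact (integrable_pow_mul_gaussianPDFReal _).sub (integrable_pow_mul_gaussianPDFReal _)

lemma integrable_sq_sub_one_sq_mul_gaussianPDFReal :
    Integrable fun s : ℝ => (s ^ 2 - 1) ^ 2 * gaussianPDFReal 0 1 s := by
  simp_rw [sq_sub_one_sq_mul_gaussianPDFReal_eq]
  exact (((integrable_pow_mul_gaussianPDFReal _).sub
    ((integrable_pow_mul_gaussianPDFReal _).const_mul 2)).add
      (integrable_pow_mul_gaussianPDFReal _))

lemma integral_sq_sub_one_mul_gaussianPDFReal :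
    ∫ s, (s ^ 2 - 1) * gaussianPDFReal 0 1 s = 0 := by
  simp_rw [sq_sub_one_mul_gaussianPDFReal_eq]
  rw [integral_sub (integrable_pow_mul_gaussianPDFReal _) (integrable_pow_mul_gaussianPDFReal _),
    integral_pow_two_mul_mul_gaussianPDFReal, integral_pow_two_mul_mul_gaussianPDFReal]
  norm_num

lemma integral_sq_sub_one_sq_mul_gaussianPDFReal :
    ∫ s, (s ^ 2 - 1) ^ 2 * gaussianPDFReal 0 1 s = 2 := by
  simp_rw [sq_sub_one_sq_mul_gaussianPDFReal_eq]
  rw [integral_add (f := fun s => s ^ (2 * 2) * gaussianPDFReal 0 1 s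
        - 2 * (s ^ (2 * 1) * gaussianPDFReal 0 1 s)) ((integrable_pow_mul_gaussianPDFReal _).sub
      ((integrable_pow_mul_gaussianPDFReal _).const_mul 2)) (integrable_pow_mul_gaussianPDFReal _),
    integral_sub (integrable_pow_mul_gaussianPDFReal _)
      ((integrable_pow_mul_gaussianPDFReal _).const_mul 2),
    integral_const_mul]
  simp only [integral_pow_two_mul_mul_gaussianPDFReal]
  norm_num [Nat.doubleFactorial]

section ProductDensity

variable {ι : Type*} [Fintype ι] [DecidableEq ι] {f g : ℝ → ℝ}

lemma prod_ite_mul_ite_mul (i j : ι) (z : ι → ℝ) :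
    ∏ k, (if k = i then g (z k) else 1) * (if k = j then g (z k) else 1) * f (z k)
      = g (z i) * g (z j) * ∏ k, f (z k) := by
  simp only [Finset.prod_mul_distrib, Finset.prod_ite_eq', Finset.mem_univ, if_true]

lemma integrable_apply_mul_apply_mul_prod (hf : Integrable f)
    (hgf : Integrable fun s => g s * f s) (hg2f : Integrable fun s => g s ^ 2 * f s) (i j : ι) :
    Integrable fun z : ι → ℝ => g (z i) * g (z j) * ∏ k, f (z k) := by
  simp_rw [← prod_ite_mul_ite_mul]
  refine Integrable.fintype_prod (f := fun k s =>
    (if k = i then g s else 1) * (if k = j then g s else 1) * f s) fun k => ?_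
  split_ifs
  · simpa only [sq] using hg2f
  · simpa only [mul_one] using hgf
  · simpa only [one_mul] using hgf
  · simpa only [one_mul] using hf

lemma integral_apply_mul_apply_mul_prod (hf1 : ∫ s, f s = 1) (hgf0 : ∫ s, g s * f s = 0)
    (i j : ι) :
    ∫ z : ι → ℝ, g (z i) * g (z j) * ∏ k, f (z k)
      = if i = j then ∫ s, g s ^ 2 * f s else 0 := by
  simp_rw [← prod_ite_mul_ite_mul]
  rw [integral_fintype_prod_volume_eq_prod fun k s =>
    (if k = i then g s else 1) * (if k = j then g s else 1) * f s]
  split_ifs with hij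
  · subst hij
    rw [Finset.prod_eq_single i (fun k _ hk => by simp [hk, hf1]) (by simp)]
    simp [sq]
  · refine Finset.prod_eq_zero (Finset.mem_univ i) ?_
    simpa [hij] using hgf0

lemma integral_sq_sum_mul_prod (hf : Integrable f) (hgf : Integrable fun s => g s * f s)
    (hg2f : Integrable fun s => g s ^ 2 * f s) (hf1 : ∫ s, f s = 1)
    (hgf0 : ∫ s, g s * f s = 0) (a : ι → ℝ) :
    ∫ z : ι → ℝ, (∑ i, a i * g (z i)) ^ 2 * ∏ k, f (z k)
      = (∫ s, g s ^ 2 * f s) * ∑ i, a i ^ 2 := by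
  have h_expand : ∀ z : ι → ℝ, (∑ i, a i * g (z i)) ^ 2 * ∏ k, f (z k)
      = ∑ i, ∑ j, a i * a j * (g (z i) * g (z j) * ∏ k, f (z k)) := by
    intro z
    rw [sq, Finset.sum_mul_sum, Finset.sum_mul]
    exact Finset.sum_congr rfl fun i _ => by
      rw [Finset.sum_mul]
      exact Finset.sum_congr rfl fun j _ => by ring
  have h_int := integrable_apply_mul_apply_mul_prod (ι := ι) hf hgf hg2f
  simp_rw [h_expand]
  rw [integral_finsetSum _ fun i _ => integrable_finsetSum _ fun j _ => (h_int i j).const_mul _]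
  simp_rw [integral_finsetSum _ fun j _ => (h_int _ j).const_mul _, integral_const_mul,
    integral_apply_mul_apply_mul_prod hf1 hgf0]
  simp [Finset.sum_mul, sq, mul_comm]

end ProductDensity

lemma integral_comp_mulVec {ι : Type*} [Fintype ι] [DecidableEq ι] {M : Matrix ι ι ℝ}
    (hM : IsUnit M.det) (F : (ι → ℝ) → ℝ) :
    ∫ z, F (M *ᵥ z) = |M.det|⁻¹ * ∫ x, F x := by
  have hemb : MeasurableEmbedding (toLin' M) :=
    (M.toLinearEquiv' (M.invertibleOfIsUnitDet hM)).toContinuousLinearEquiv.toHomeomorph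
      |>.measurableEmbedding
  change ∫ z, F (toLin' M z) = _
  rw [← hemb.integral_map, Real.map_matrix_volume_pi_eq_smul_volume_pi hM.ne_zero,
    integral_smul_measure, ENNReal.toReal_ofReal (abs_nonneg _), abs_inv, smul_eq_mul]

lemma dotProduct_mulVec_mulVec_mulVec {ι R : Type*} [Fintype ι] [CommSemiring R]
    (M N : Matrix ι ι R) (z : ι → R) : (M *ᵥ z) ⬝ᵥ (N *ᵥ (M *ᵥ z)) = z ⬝ᵥ ((Mᵀ * N * M) *ᵥ z) := by
  rw [mulVec_mulVec, ← vecMul_transpose, dotProduct_mulVec, vecMul_vecMul,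
    dotProduct_mulVec, Matrix.mul_assoc]

section GaussDensity

variable {d : ℕ} {M : Matrix (Fin d) (Fin d) ℝ}

lemma gaussDensity_mul_transpose_mulVec_mul_abs_det (hM : IsUnit M.det) (z : Fin d → ℝ) :
    gaussDensity d (M * Mᵀ) (M *ᵥ z) * |M.det| = ∏ i, gaussianPDFReal 0 1 (z i) := by
  have h_quad : (M *ᵥ z) ⬝ᵥ ((M * Mᵀ)⁻¹ *ᵥ (M *ᵥ z)) = ∑ i, z i ^ 2 := by
    have hMt : IsUnit Mᵀ.det := by rwa [det_transpose]
    rw [dotProduct_mulVec_mulVec_mulVec, Matrix.mul_inv_rev, ← Matrix.mul_assoc Mᵀ,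
      mul_nonsing_inv _ hMt, Matrix.one_mul, nonsing_inv_mul _ hM, one_mulVec]
    simp [dotProduct, sq]
  have h_norm :
      ((2 * π) ^ d * (M * Mᵀ).det) ^ (-(1 / 2 : ℝ)) * |M.det| = (√(2 * π))⁻¹ ^ d := by
    have hdet : 0 < |M.det| := abs_pos.mpr hM.ne_zero
    have h_pow : √((2 * π) ^ d) = √(2 * π) ^ d := by
      rw [← sqrt_sq (pow_nonneg (sqrt_nonneg (2 * π)) d), ← pow_mul, pow_mul',
        sq_sqrt (by positivity)]
    rw [det_mul, det_transpose, ← sq, ← sq_abs, rpow_neg (by positivity), ← sqrt_eq_rpow,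
      sqrt_mul (by positivity), sqrt_sq hdet.le, h_pow, inv_pow]
    field_simp
  rw [gaussDensity, h_quad, mul_right_comm, h_norm, Finset.mul_sum, exp_sum]
  simp_rw [gaussianPDFReal_zero_one, Finset.prod_mul_distrib, Finset.prod_const,
    Finset.card_univ, Fintype.card_fin]

lemma integral_mul_gaussDensity_mul_transpose (hM : IsUnit M.det) (F : (Fin d → ℝ) → ℝ) :
    ∫ x, F x * gaussDensity d (M * Mᵀ) x
      = ∫ z, F (M *ᵥ z) * ∏ i, gaussianPDFReal 0 1 (z i) := by
  simp_rw [← gaussDensity_mul_transpose_mulVec_mul_abs_det hM, ← mul_assoc]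
  rw [integral_mul_const, integral_comp_mulVec hM (fun x => F x * gaussDensity d (M * Mᵀ) x),
    mul_comm, mul_inv_cancel_left₀ (abs_pos.mpr hM.ne_zero).ne']

lemma integral_sq_dotProduct_mulVec_sub_trace_mul_gaussDensity {A C : Matrix (Fin d) (Fin d) ℝ}
    {μ : Fin d → ℝ} (hM : IsUnit M.det) (hMC : M * Mᵀ = C) (hA : Mᵀ * A * M = diagonal μ) :
    ∫ x, (x ⬝ᵥ A *ᵥ x - (A * C).trace) ^ 2 * gaussDensity d C x = 2 * ∑ i, μ i ^ 2 := by
  subst hMC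
  have h_centered : ∀ z, (M *ᵥ z) ⬝ᵥ A *ᵥ (M *ᵥ z) - (A * (M * Mᵀ)).trace
      = ∑ i, μ i * (z i ^ 2 - 1) := by
    intro z
    rw [dotProduct_mulVec_mulVec_mulVec, hA, ← Matrix.mul_assoc, trace_mul_comm,
      ← Matrix.mul_assoc, hA, trace_diagonal]
    simp only [dotProduct, mulVec_diagonal]
    rw [← Finset.sum_sub_distrib]
    exact Finset.sum_congr rfl fun i _ => by ring
  rw [integral_mul_gaussDensity_mul_transpose hM fun x => (x ⬝ᵥ A *ᵥ x - _) ^ 2]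
  simp_rw [h_centered]
  rw [integral_sq_sum_mul_prod (integrable_gaussianPDFReal 0 1)
    integrable_sq_sub_one_mul_gaussianPDFReal integrable_sq_sub_one_sq_mul_gaussianPDFReal
    (integral_gaussianPDFReal_eq_one 0 one_ne_zero) integral_sq_sub_one_mul_gaussianPDFReal,
    integral_sq_sub_one_sq_mul_gaussianPDFReal]

end GaussDensity

namespace Matrix.PosDef

variable {ι : Type*} [Fintype ι] [DecidableEq ι] {C : Matrix ι ι ℝ}

lemma eq_conj_diagonal_eigenvalues (hC : C.PosDef) :
    C = conjStarAlgAut ℝ _ hC.isHermitian.eigenvectorUnitary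
      (diagonal hC.isHermitian.eigenvalues) := by
  simpa using hC.isHermitian.spectral_theorem

lemma exists_mul_transpose_eq_and_transpose_mul_inv_one_add_smul_mul (hC : C.PosDef) {t : ℝ}
    (ht : 0 ≤ t) : ∃ M : Matrix ι ι ℝ, IsUnit M.det ∧ M * Mᵀ = C ∧
      Mᵀ * (1 + t • C)⁻¹ * M = diagonal fun i =>
        hC.isHermitian.eigenvalues i / (1 + t * hC.isHermitian.eigenvalues i) := by
  set u := hC.isHermitian.eigenvectorUnitary
  set U : Matrix ι ι ℝ := (u : Matrix ι ι ℝ)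
  set ev := hC.isHermitian.eigenvalues
  set conjU := conjStarAlgAut ℝ (Matrix ι ι ℝ) u
  have hev : ∀ i, 0 < ev i := hC.eigenvalues_pos
  have h_one_add : ∀ i, 0 < 1 + t * ev i := fun i => by have := hev i; positivity
  have hconjU : ∀ X, conjU X = U * X * Uᵀ := fun X => by
    simp [conjU, U, star_eq_conjTranspose]
  have hUU : Uᵀ * U = 1 := by simpa [U, star_eq_conjTranspose] using Unitary.coe_star_mul_self u
  set S := diagonal fun i => √(ev i)
  have hS : S * S = diagonal ev := by
    rw [diagonal_mul_diagonal]
    exact congrArg diagonal (funext fun i => mul_self_sqrt (hev i).le)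
  have h_conj : ∀ X, (U * S)ᵀ * conjU X * (U * S) = S * X * S := by
    intro X
    calc (U * S)ᵀ * conjU X * (U * S) = Sᵀ * (Uᵀ * U) * X * (Uᵀ * U) * S := by
          simp only [hconjU, transpose_mul, Matrix.mul_assoc]
      _ = S * X * S := by rw [hUU, diagonal_transpose, Matrix.mul_one, Matrix.mul_one]
  have h_one_add_smul : 1 + t • C = conjU (diagonal fun i => 1 + t * ev i) := by
    rw [hC.eq_conj_diagonal_eigenvalues, ← map_one conjU, ← map_smul, ← map_add, ← diagonal_one,
      ← diagonal_smul, ← diagonal_add]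
    rfl
  have h_inv : (1 + t • C)⁻¹ = conjU (diagonal fun i => (1 + t * ev i)⁻¹) := by
    refine inv_eq_left_inv ?_
    rw [h_one_add_smul, ← map_mul, diagonal_mul_diagonal, ← map_one conjU, ← diagonal_one]
    exact congrArg (conjU ∘ diagonal) (funext fun i => inv_mul_cancel₀ (h_one_add i).ne')
  refine ⟨U * S, ?_, ?_, ?_⟩
  · rw [det_mul, IsUnit.mul_iff, det_diagonal, isUnit_iff_ne_zero (a := ∏ i, _)]
    exact ⟨UnitaryGroup.det_isUnit u, Finset.prod_ne_zero_iff.mpr fun i _ =>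
      (sqrt_pos.mpr (hev i)).ne'⟩
  · rw [transpose_mul, diagonal_transpose, ← Matrix.mul_assoc, Matrix.mul_assoc U, hS, ← hconjU,
      ← hC.eq_conj_diagonal_eigenvalues]
  · rw [h_inv, h_conj, diagonal_mul_diagonal, diagonal_mul_diagonal]
    refine congrArg diagonal (funext fun i => ?_)
    rw [mul_right_comm, mul_self_sqrt (hev i).le, div_eq_mul_inv]

end Matrix.PosDef

theorem gaussian_quadratic_concentration_general (d : ℕ) (Λ : ℝ)
    (C : Matrix (Fin d) (Fin d) ℝ) (hC : C.PosDef)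
    (heig : ∀ i : Fin d, hC.isHermitian.eigenvalues i ≤ Λ)
    (t : ℝ) (ht : 0 ≤ t) :
    ∫ x : Fin d → ℝ,
        ((1 / (d : ℝ)) * (x ⬝ᵥ ((1 + t • C)⁻¹).mulVec x)
          - (1 / (d : ℝ)) * ((1 + t • C)⁻¹ * C).trace) ^ 2 * gaussDensity d C x
      ≤ 2 * Λ ^ 2 / (d : ℝ) := by
  obtain ⟨M, hM, hMC, hMA⟩ :=
    hC.exists_mul_transpose_eq_and_transpose_mul_inv_one_add_smul_mul ht
  set ev := hC.isHermitian.eigenvalues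
  have h_sum : ∑ i, (ev i / (1 + t * ev i)) ^ 2 ≤ d * Λ ^ 2 := by
    have hev : ∀ i, 0 < ev i := hC.eigenvalues_pos
    calc ∑ i, (ev i / (1 + t * ev i)) ^ 2 ≤ ∑ _i : Fin d, Λ ^ 2 :=
          Finset.sum_le_sum fun i _ => pow_le_pow_left₀ (by have := hev i; positivity)
            ((div_le_self (hev i).le (le_add_of_nonneg_right (mul_nonneg ht (hev i).le))).trans
              (heig i)) 2
      _ = d * Λ ^ 2 := by simp
  calc _ = (1 / (d : ℝ)) ^ 2 * ∫ x, (x ⬝ᵥ (1 + t • C)⁻¹ *ᵥ x - ((1 + t • C)⁻¹ * C).trace) ^ 2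
          * gaussDensity d C x := by
        rw [← integral_const_mul]
        congr 1 with x
        ring
    _ = (1 / (d : ℝ)) ^ 2 * (2 * ∑ i, (ev i / (1 + t * ev i)) ^ 2) := by
        rw [integral_sq_dotProduct_mulVec_sub_trace_mul_gaussDensity hM hMC hMA]
    _ ≤ (1 / (d : ℝ)) ^ 2 * (2 * (d * Λ ^ 2)) := by gcongr
    _ = 2 * Λ ^ 2 / d := by
        rcases eq_or_ne (d : ℝ) 0 with hd | hd
        · simp [hd]
        · field_simp

theorem gaussian_quadratic_concentration (d : ℕ) (hd : 1 ≤ d) (Λ : ℝ) (hΛ : 0 < Λ)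
    (C : Matrix (Fin d) (Fin d) ℝ) (hC : C.PosDef) (hCsymm : C.IsSymm)
    (heig : ∀ i : Fin d, hC.isHermitian.eigenvalues i ≤ Λ)
    (t : ℝ) (ht : 0 ≤ t) :
    ∫ x : Fin d → ℝ,
        ((1 / (d : ℝ)) * (x ⬝ᵥ ((1 + t • C)⁻¹).mulVec x)
          - (1 / (d : ℝ)) * ((1 + t • C)⁻¹ * C).trace) ^ 2 * gaussDensity d C x
      ≤ 2 * Λ ^ 2 / (d : ℝ) :=
  gaussian_quadratic_concentration_general d Λ C hC heig t ht
end

section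
/- For each α > 0 let u_CLT(α) be the unique positive solution of log(1+u) + u/(1+u) − (1/2)·log(1+2u) − u/(1+2u) = α, and set h_CLT(α) = u_CLT(α)^{−1/2}. Then e^{α}·h_CLT(α) → sqrt(e/2) as α → ∞. -/
open Filter

lemma aux_inv_tendsto : Tendsto (fun u : ℝ => u⁻¹) atTop (nhds 0) :=
  tendsto_inv_atTop_zero

lemma aux_tendsto_A : Tendsto (fun u : ℝ => (1+u)/(1+2*u)) atTop (nhds (1/2)) := by
  have h1 : Tendsto (fun u : ℝ => (u⁻¹+1)/(u⁻¹+2)) atTop (nhds (((0:ℝ)+1)/(0+2))) :=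
    (aux_inv_tendsto.add tendsto_const_nhds).div
      (aux_inv_tendsto.add tendsto_const_nhds) (by norm_num)
  norm_num at h1
  refine h1.congr' ?_
  filter_upwards [eventually_gt_atTop (0:ℝ)] with u hu
  rw [div_eq_div_iff (by positivity) (by positivity)]
  field_simp

lemma aux_tendsto_B : Tendsto (fun u : ℝ => u/(1+u)) atTop (nhds 1) := by
  have h1 : Tendsto (fun u : ℝ => 1/(u⁻¹+1)) atTop (nhds ((1:ℝ)/(0+1))) :=
    tendsto_const_nhds.div (aux_inv_tendsto.add tendsto_const_nhds) (by norm_num)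
  norm_num at h1
  refine h1.congr' ?_
  filter_upwards [eventually_gt_atTop (0:ℝ)] with u hu
  rw [inv_eq_one_div, div_eq_div_iff (by positivity) (by positivity)]
  field_simp

lemma aux_tendsto_C : Tendsto (fun u : ℝ => u/(1+2*u)) atTop (nhds (1/2)) := by
  have h1 : Tendsto (fun u : ℝ => 1/(u⁻¹+2)) atTop (nhds ((1:ℝ)/(0+2))) :=
    tendsto_const_nhds.div (aux_inv_tendsto.add tendsto_const_nhds) (by norm_num)
  norm_num at h1
  refine h1.congr' ?_
  filter_upwards [eventually_gt_atTop (0:ℝ)] with u hu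
  rw [inv_eq_one_div, div_eq_div_iff (by positivity) (by positivity)]
  field_simp

lemma aux_tendsto_D : Tendsto (fun u : ℝ => (1+u)/u) atTop (nhds 1) := by
  have h1 : Tendsto (fun u : ℝ => u⁻¹+1) atTop (nhds ((0:ℝ)+1)) :=
    aux_inv_tendsto.add tendsto_const_nhds
  norm_num at h1
  refine h1.congr' ?_
  filter_upwards [eventually_gt_atTop (0:ℝ)] with u hu
  field_simp

lemma aux_phi_tendsto :
    Tendsto (fun u : ℝ => ((1+u)/u) * ((1+u)/(1+2*u))
        * Real.exp (2*(u/(1+u)) - 2*(u/(1+2*u)))) atTop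
      (nhds (Real.exp 1 / 2)) := by
  have hin : Tendsto (fun u : ℝ => 2*(u/(1+u)) - 2*(u/(1+2*u))) atTop
      (nhds (2*1 - 2*(1/2))) :=
    (tendsto_const_nhds.mul aux_tendsto_B).sub (tendsto_const_nhds.mul aux_tendsto_C)
  have hexp : Tendsto (fun u : ℝ => Real.exp (2*(u/(1+u)) - 2*(u/(1+2*u)))) atTop
      (nhds (Real.exp (2*1 - 2*(1/2)))) := (Real.continuous_exp.tendsto _).comp hin
  have := (aux_tendsto_D.mul aux_tendsto_A).mul hexp
  convert this using 2
  norm_num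
  ring

theorem clt_bandwidth_asymptotics (uCLT hCLT : ℝ → ℝ)
    (huspec : ∀ α : ℝ, 0 < α → 0 < uCLT α ∧
      Real.log (1 + uCLT α) + uCLT α / (1 + uCLT α)
        - (1 / 2) * Real.log (1 + 2 * uCLT α) - uCLT α / (1 + 2 * uCLT α) = α)
    (hhspec : ∀ α : ℝ, 0 < α → hCLT α = (uCLT α) ^ (-(1 / 2) : ℝ)) :
    Tendsto (fun α : ℝ => Real.exp α * hCLT α) atTop
      (nhds (Real.sqrt (Real.exp 1 / 2))) := by
  -- Step 1: uCLT tends to atTop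
  have hu_top : Tendsto uCLT atTop atTop := by
    have hlow : Tendsto (fun α : ℝ => Real.exp (α - 1) - 1) atTop atTop :=
      tendsto_atTop_add_const_right _ _
        ((Real.tendsto_exp_atTop).comp (tendsto_atTop_add_const_right _ _ tendsto_id))
    refine tendsto_atTop_mono' atTop ?_ hlow
    filter_upwards [eventually_gt_atTop (0:ℝ)] with α hα
    obtain ⟨hu, heq⟩ := huspec α hα
    have hle : α ≤ Real.log (1 + uCLT α) + 1 := by
      have h1 : uCLT α / (1 + uCLT α) ≤ 1 := by
        rw [div_le_one (by linarith)]; linarith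
      have h2 : 0 ≤ Real.log (1 + 2 * uCLT α) :=
        Real.log_nonneg (by linarith)
      have h3 : 0 ≤ uCLT α / (1 + 2 * uCLT α) := by positivity
      nlinarith [heq]
    have : Real.exp (α - 1) ≤ 1 + uCLT α := by
      calc Real.exp (α - 1) ≤ Real.exp (Real.log (1 + uCLT α)) :=
            Real.exp_le_exp.mpr (by linarith)
        _ = 1 + uCLT α := Real.exp_log (by linarith)
    linarith
  -- Step 2: composed limit
  have h2 : Tendsto (fun α : ℝ =>
      ((1 + uCLT α)/(uCLT α)) * ((1 + uCLT α)/(1 + 2*uCLT α))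
        * Real.exp (2*(uCLT α/(1 + uCLT α)) - 2*(uCLT α/(1 + 2*uCLT α)))) atTop
      (nhds (Real.exp 1 / 2)) := aux_phi_tendsto.comp hu_top
  have h3 : Tendsto (fun α : ℝ => Real.sqrt
      (((1 + uCLT α)/(uCLT α)) * ((1 + uCLT α)/(1 + 2*uCLT α))
        * Real.exp (2*(uCLT α/(1 + uCLT α)) - 2*(uCLT α/(1 + 2*uCLT α))))) atTop
      (nhds (Real.sqrt (Real.exp 1 / 2))) :=
    (Real.continuous_sqrt.tendsto _).comp h2
  refine h3.congr' ?_
  filter_upwards [eventually_gt_atTop (0:ℝ)] with α hα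
  obtain ⟨hu, heq⟩ := huspec α hα
  set u := uCLT α with hudef
  have h1u : (0:ℝ) < 1 + u := by linarith
  have h2u : (0:ℝ) < 1 + 2*u := by linarith
  -- φ(u) = exp (2α) / u
  have key : ((1+u)/u) * ((1+u)/(1+2*u)) * Real.exp (2*(u/(1+u)) - 2*(u/(1+2*u)))
      = Real.exp (2*α) / u := by
    have h2a : 2*α = 2*Real.log (1+u) - Real.log (1+2*u)
        + (2*(u/(1+u)) - 2*(u/(1+2*u))) := by
      rw [← heq]; ring
    have e1 : Real.exp (2*Real.log (1+u)) = (1+u)^2 := by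
      rw [mul_comm, Real.exp_mul, Real.exp_log h1u]
      norm_num
    have e2 : Real.exp (Real.log (1+2*u)) = 1+2*u := Real.exp_log h2u
    have e5 : Real.exp (2*α)
        = (1+u)^2/(1+2*u) * Real.exp (2*(u/(1+u)) - 2*(u/(1+2*u))) := by
      rw [h2a, Real.exp_add]
      congr 1
      rw [Real.exp_sub, e1, e2]
    rw [e5]
    field_simp
  rw [key, hhspec α hα, ← hudef]
  have e3 : Real.sqrt (Real.exp (2*α)) = Real.exp α := by
    have : Real.exp (2*α) = Real.exp α ^ 2 := by
      rw [← Real.exp_nat_mul]; norm_num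
    rw [this, Real.sqrt_sq (Real.exp_nonneg _)]
  have e4 : u ^ (-(1/2) : ℝ) = (Real.sqrt u)⁻¹ := by
    rw [Real.rpow_neg hu.le, ← Real.sqrt_eq_rpow]
  rw [Real.sqrt_div (Real.exp_nonneg _), e3, e4, div_eq_mul_inv]
end

section
/- For every real u > 0, one has the strict inequality log(1+u) + u/(1+u) − (1/2)·log(1+2u) − u/(1+2u) > (1/2)·[log(1+u) − u/(1+u)²]. -/
theorem FCLT_gt_FG (u : ℝ) (hu : 0 < u) :
    Real.log (1 + u) + u / (1 + u) - (1 / 2) * Real.log (1 + 2 * u) - u / (1 + 2 * u)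
      > (1 / 2) * (Real.log (1 + u) - u / (1 + u) ^ 2) := by
  have h1 : (0:ℝ) < 1 + u := by linarith
  have h2 : (0:ℝ) < 1 + 2 * u := by linarith
  have hxpos : 0 < (1 + 2 * u) / (1 + u) := div_pos h2 h1
  have hxne : (1 + 2 * u) / (1 + u) ≠ 1 := by
    intro h
    rw [div_eq_one_iff_eq h1.ne'] at h
    linarith
  have key : Real.log (1 + 2 * u) - Real.log (1 + u) < u / (1 + u) := by
    have := Real.log_lt_sub_one_of_pos hxpos hxne
    rw [Real.log_div h2.ne' h1.ne'] at this
    have heq : (1 + 2 * u) / (1 + u) - 1 = u / (1 + u) := by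
      field_simp; ring
    linarith [heq ▸ this]
  have halg : u / (1 + 2 * u) ≤ (1/2) * (u / (1 + u)) + (1/2) * (u / (1 + u) ^ 2) := by
    rw [div_le_iff₀ h2]
    have e1 : u / (1 + u) = u * (1 + u)⁻¹ := div_eq_mul_inv _ _
    have e2 : u / (1 + u) ^ 2 = u * ((1 + u) ^ 2)⁻¹ := div_eq_mul_inv _ _
    have i1 : (1 + u) * (1 + u)⁻¹ = 1 := mul_inv_cancel₀ h1.ne'
    have i2 : (1 + u) ^ 2 * ((1 + u) ^ 2)⁻¹ = 1 := mul_inv_cancel₀ (by positivity)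
    nlinarith [mul_pos hu hu, mul_nonneg (mul_nonneg hu.le hu.le) hu.le]
  linarith
end

section
/- For each α > 0, let h_CLT(α) be the unique positive h solving log(1+u) + u/(1+u) − (1/2)·log(1+2u) − u/(1+2u) = α with u = 1/h², and let h_G(α) be the unique positive h solving (1/2)·[log(1+u) − u/(1+u)²] = α with u = 1/h². Then h_G(α) < h_CLT(α) for every α > 0. -/
/-!
Write both defining equations in the variable `u = 1/h²`: the CLT line is `cltRate u = α` and the
glass line is `glassRate u = α`. Since `log((1+2u)/(1+u)) ≤ u/(1+u)`, one gets
`cltRate u - glassRate u ≥ u² / (2(1+u)²(1+2u)) > 0`, so `glassRate (1/h_CLT²) < α = glassRate (1/h_G²)`.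
As `glassRate` is strictly increasing (its derivative is `u(u+3)/(2(1+u)³)`), `1/h_CLT² < 1/h_G²`.
-/

open Real Set

noncomputable def cltRate (u : ℝ) : ℝ :=
  log (1 + u) + u / (1 + u) - (1 / 2) * log (1 + 2 * u) - u / (1 + 2 * u)

noncomputable def glassRate (u : ℝ) : ℝ :=
  (1 / 2) * (log (1 + u) - u / (1 + u) ^ 2)

lemma hasDerivAt_glassRate {u : ℝ} (hu : 0 ≤ u) :
    HasDerivAt glassRate (u * (u + 3) / (2 * (1 + u) ^ 3)) u := by
  have hu1 : (1 : ℝ) + u ≠ 0 := by positivity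
  have hlog : HasDerivAt (fun x : ℝ => log (1 + x)) (1 / (1 + u)) u := by
    simpa using ((hasDerivAt_id u).const_add 1).log hu1
  have hsq : HasDerivAt (fun x : ℝ => (1 + x) ^ 2) (2 * (1 + u)) u := by
    simpa [mul_comm] using ((hasDerivAt_id u).const_add 1).fun_pow 2
  have hquot := (hasDerivAt_id u).div hsq (pow_ne_zero 2 hu1)
  refine ((hlog.sub hquot).const_mul (1 / 2 : ℝ)).congr_deriv ?_
  simp only [id]
  field_simp
  ring

lemma strictMonoOn_glassRate : StrictMonoOn glassRate (Ici 0) := by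
  refine strictMonoOn_of_deriv_pos (convex_Ici 0) ?_ fun u hu => ?_
  · exact fun u hu => (hasDerivAt_glassRate hu).continuousAt.continuousWithinAt
  · rw [interior_Ici] at hu
    rw [(hasDerivAt_glassRate hu.le).deriv]
    have : (0 : ℝ) < u := hu
    positivity

lemma log_one_add_two_mul_sub_log_one_add_le {u : ℝ} (hu : 0 ≤ u) :
    log (1 + 2 * u) - log (1 + u) ≤ u / (1 + u) := by
  have hu1 : (0 : ℝ) < 1 + u := by linarith
  have hratio : (1 + 2 * u) / (1 + u) - 1 = u / (1 + u) := by field_simp; ring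
  rw [← log_div (by positivity) hu1.ne', ← hratio]
  exact log_le_sub_one_of_pos (by positivity)

lemma glassRate_lt_cltRate {u : ℝ} (hu : 0 < u) : glassRate u < cltRate u := by
  have hlog := log_one_add_two_mul_sub_log_one_add_le hu.le
  have hgap : (1 / 2) * (u / (1 + u)) - u / (1 + 2 * u) + (1 / 2) * (u / (1 + u) ^ 2)
      = u ^ 2 / (2 * (1 + u) ^ 2 * (1 + 2 * u)) := by
    field_simp
    ring
  have hgap_pos : 0 < u ^ 2 / (2 * (1 + u) ^ 2 * (1 + 2 * u)) := by positivity
  unfold glassRate cltRate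
  linarith

theorem glass_below_clt (hCLT hG : ℝ → ℝ)
    (hCLTspec : ∀ α : ℝ, 0 < α → 0 < hCLT α ∧
      Real.log (1 + 1 / (hCLT α) ^ 2) + (1 / (hCLT α) ^ 2) / (1 + 1 / (hCLT α) ^ 2)
        - (1 / 2) * Real.log (1 + 2 * (1 / (hCLT α) ^ 2))
        - (1 / (hCLT α) ^ 2) / (1 + 2 * (1 / (hCLT α) ^ 2)) = α)
    (hGspec : ∀ α : ℝ, 0 < α → 0 < hG α ∧
      (1 / 2) * (Real.log (1 + 1 / (hG α) ^ 2)
        - (1 / (hG α) ^ 2) / (1 + 1 / (hG α) ^ 2) ^ 2) = α) :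
    ∀ α : ℝ, 0 < α → hG α < hCLT α := by
  intro α hα
  obtain ⟨hC_pos, hC_eq⟩ := hCLTspec α hα
  obtain ⟨hG_pos, hG_eq⟩ := hGspec α hα
  have hglass_lt : glassRate (1 / hCLT α ^ 2) < glassRate (1 / hG α ^ 2) := by
    calc glassRate (1 / hCLT α ^ 2) < cltRate (1 / hCLT α ^ 2) := glassRate_lt_cltRate (by positivity)
      _ = glassRate (1 / hG α ^ 2) := hC_eq.trans hG_eq.symm
  have hu_lt : 1 / hCLT α ^ 2 < 1 / hG α ^ 2 :=
    (strictMonoOn_glassRate.lt_iff_lt (mem_Ici.mpr (by positivity))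
      (mem_Ici.mpr (by positivity))).mp hglass_lt
  rw [one_div_lt_one_div (by positivity) (by positivity)] at hu_lt
  exact (pow_lt_pow_iff_left₀ hG_pos.le hC_pos.le two_ne_zero).mp hu_lt
end

section
/- For each α > 0, let t(α) be the unique positive solution of (1/2)·[log(1+t) − t/(1+t)²] = α, set l(α) = 1/(1+t(α)) + 1/(1+t(α))², and define the glass-transition bandwidth h_G(α) = t(α)^{−1/2} and the optimal bandwidth h_opt(α) = sqrt(l(α)). Then h_opt(α) < h_G(α) for every α > 0. -/
theorem optimal_bandwidth_in_glass_phase (α t l hG hopt : ℝ)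
    (hα : 0 < α) (ht : 0 < t)
    (hteq : (1 / 2) * (Real.log (1 + t) - t / (1 + t) ^ 2) = α)
    (hl : l = 1 / (1 + t) + 1 / (1 + t) ^ 2)
    (hhG : hG = t ^ (-(1 / 2) : ℝ))
    (hhopt : hopt = Real.sqrt l) :
    hopt < hG := by
  have h1t : (0:ℝ) < 1 + t := by linarith
  have hlpos : 0 < l := by rw [hl]; positivity
  have hlt : l * t < 1 := by
    rw [hl]
    rw [div_add_div _ _ (ne_of_gt h1t) (ne_of_gt (pow_pos h1t 2))]
    rw [div_mul_eq_mul_div, div_lt_one (by positivity)]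
    nlinarith
  have hG' : hG = (Real.sqrt t)⁻¹ := by
    rw [hhG, Real.rpow_neg ht.le, ← Real.sqrt_eq_rpow]
  have key : Real.sqrt l * Real.sqrt t < 1 := by
    rw [← Real.sqrt_mul hlpos.le]
    calc Real.sqrt (l * t) < Real.sqrt 1 := Real.sqrt_lt_sqrt (by positivity) hlt
    _ = 1 := Real.sqrt_one
  rw [hhopt, hG', inv_eq_one_div, lt_div_iff₀ (Real.sqrt_pos.mpr ht)]
  exact key
end
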